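/- Let V be the vertex set of Z^d or the torus Z^d_n, let χ be a proper 3-coloring of V avoiding some conditions, and let W ⊆ V satisfy ∂_int W ⊆ O, ∂_ext W ⊆ E, χ nonzero on ∂_int W ∪ ∂_ext W. For a coordinate direction s, let W^s = {x ∈ ∂_int W : σ_{-s}(x) ∉ W}, where σ_s is the shift by the s-th signed standard basis vector. For S ⊆ W^s define χ^s_S by: χ^s_S(v) = 0 if v ∈ S; χ^s_S(v) = χ(v) if v ∈ (W^s \ S) ∪ (V \ W); χ^s_S(v) = f(χ(σ_{-s}(v))) if v ∈ W \ W^s, where f fixes 0 and transposes 1 and 2. Then χ^s_S is a proper 3-coloring of V. -/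
import Mathlib


/-- Nearest-neighbor adjacency on `ℤ^d`. -/
def adjZ {d : ℕ} (x y : Fin d → ℤ) : Prop :=
  ∃ i, (y i = x i + 1 ∨ y i = x i - 1) ∧ ∀ j, j ≠ i → y j = x j

/-- Internal vertex boundary of `W ⊆ ℤ^d`. -/
def intBdryZ {d : ℕ} (W : Set (Fin d → ℤ)) : Set (Fin d → ℤ) :=
  {x | x ∈ W ∧ ∃ y, y ∉ W ∧ adjZ x y}

/-- External vertex boundary of `W ⊆ ℤ^d`. -/
def extBdryZ {d : ℕ} (W : Set (Fin d → ℤ)) : Set (Fin d → ℤ) :=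
  {y | y ∉ W ∧ ∃ x, x ∈ W ∧ adjZ y x}

/-- The shift `σ_s` in the signed direction `(s, ε)`: add `ε` to coordinate `s`. -/
def shiftZ {d : ℕ} (s : Fin d) (ε : ℤ) (x : Fin d → ℤ) : Fin d → ℤ :=
  Function.update x s (x s + ε)

/-- `W^s = {x ∈ ∂_int W : σ_{-s}(x) ∉ W}`. -/
def sideSet {d : ℕ} (W : Set (Fin d → ℤ)) (s : Fin d) (ε : ℤ) :
    Set (Fin d → ℤ) :=
  {x | x ∈ intBdryZ W ∧ shiftZ s (-ε) x ∉ W}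

/-- The map `f` fixing color `0` and transposing colors `1` and `2`. -/
def swap12 : Fin 3 → Fin 3 := fun c => if c = 1 then 2 else if c = 2 then 1 else 0

open Classical in
/-- The modified coloring `χ^s_S`: `0` on `S`, `χ` on `(W^s \ S) ∪ (V \ W)`,
and `f(χ(σ_{-s}(v)))` on `W \ W^s`. -/
noncomputable def chiShift {d : ℕ} (χ : (Fin d → ℤ) → Fin 3)
    (W S : Set (Fin d → ℤ)) (s : Fin d) (ε : ℤ) : (Fin d → ℤ) → Fin 3 :=
  fun v =>
    if v ∈ S then 0
    else if v ∈ W ∧ v ∉ sideSet W s ε then swap12 (χ (shiftZ s (-ε) v))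
    else χ v

lemma adjZ_symm {d : ℕ} {x y : Fin d → ℤ} (h : adjZ x y) : adjZ y x := by
  obtain ⟨i, hi, hj⟩ := h
  refine ⟨i, ?_, fun j hjj => (hj j hjj).symm⟩
  omega

lemma shiftZ_apply_self {d : ℕ} (s : Fin d) (c : ℤ) (x : Fin d → ℤ) :
    shiftZ s c x s = x s + c := by
  simp [shiftZ]

lemma shiftZ_apply_ne {d : ℕ} (s : Fin d) (c : ℤ) (x : Fin d → ℤ) {j : Fin d}
    (h : j ≠ s) : shiftZ s c x j = x j := by
  simp [shiftZ, Function.update_apply, h]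

lemma adjZ_shift {d : ℕ} (s : Fin d) (c : ℤ) {x y : Fin d → ℤ} (h : adjZ x y) :
    adjZ (shiftZ s c x) (shiftZ s c y) := by
  obtain ⟨i, hi, hj⟩ := h
  refine ⟨i, ?_, fun j hjj => ?_⟩
  · by_cases his : i = s
    · subst his
      rw [shiftZ_apply_self, shiftZ_apply_self]
      omega
    · rw [shiftZ_apply_ne _ _ _ his, shiftZ_apply_ne _ _ _ his]
      exact hi
  · by_cases hjs : j = s
    · subst hjs
      rw [shiftZ_apply_self, shiftZ_apply_self, hj _ hjj]
    · rw [shiftZ_apply_ne _ _ _ hjs, shiftZ_apply_ne _ _ _ hjs]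
      exact hj j hjj

lemma adjZ_shift_self {d : ℕ} (s : Fin d) {ε : ℤ} (hε : ε = 1 ∨ ε = -1)
    (x : Fin d → ℤ) : adjZ x (shiftZ s (-ε) x) := by
  refine ⟨s, ?_, fun j hj => shiftZ_apply_ne _ _ _ hj⟩
  rw [shiftZ_apply_self]
  omega

lemma adjZ_parity {d : ℕ} {x y : Fin d → ℤ} (h : adjZ x y) :
    Even (∑ i, y i) ↔ ¬ Even (∑ i, x i) := by
  obtain ⟨i, hi, hj⟩ := h
  have hx := Finset.add_sum_erase Finset.univ x (Finset.mem_univ i)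
  have hy := Finset.add_sum_erase Finset.univ y (Finset.mem_univ i)
  have he : ∑ j ∈ Finset.univ.erase i, y j = ∑ j ∈ Finset.univ.erase i, x j :=
    Finset.sum_congr rfl fun j hj' => hj j (Finset.ne_of_mem_erase hj')
  have hsum : ∑ j, y j = ∑ j, x j + 1 ∨ ∑ j, y j = ∑ j, x j - 1 := by omega
  rcases hsum with h | h <;> rw [h] <;>
    simp [Int.even_add_one, Int.even_sub_one]

/-- Key geometric fact: if `u ∈ W^s`, `v ∈ W \ W^s` are adjacent, then
`σ_{-s}(v)` is an internal boundary point and `σ_{-s}(u)` an external one. -/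
lemma sideC_facts {d : ℕ} {W : Set (Fin d → ℤ)} {s : Fin d} {ε : ℤ}
    (hε : ε = 1 ∨ ε = -1)
    (hint : ∀ x ∈ intBdryZ W, ¬ Even (∑ i, x i))
    {u v : Fin d → ℤ} (hu : u ∈ sideSet W s ε) (hv : v ∈ W)
    (hv' : v ∉ sideSet W s ε) (huv : adjZ u v) :
    shiftZ s (-ε) v ∈ intBdryZ W ∧ shiftZ s (-ε) u ∉ W ∧
      shiftZ s (-ε) u ∈ extBdryZ W := by
  obtain ⟨huint, hTu⟩ := hu
  have hvpar : Even (∑ i, v i) := (adjZ_parity huv).mpr (hint u huint)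
  have hvint : v ∉ intBdryZ W := fun h => hint v h hvpar
  have hTvW : shiftZ s (-ε) v ∈ W := by
    by_contra h
    exact hvint ⟨hv, _, h, adjZ_shift_self s hε v⟩
  have hadj : adjZ (shiftZ s (-ε) v) (shiftZ s (-ε) u) :=
    adjZ_symm (adjZ_shift s (-ε) huv)
  exact ⟨⟨hTvW, _, hTu, hadj⟩, hTu, ⟨hTu, _, hTvW, adjZ_symm hadj⟩⟩

/-- Key geometric fact for edges leaving `W` into `W \ W^s`. -/
lemma outC_facts {d : ℕ} {W : Set (Fin d → ℤ)} {s : Fin d} {ε : ℤ}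
    {u v : Fin d → ℤ} (hu : u ∉ W) (hv : v ∈ W)
    (hv' : v ∉ sideSet W s ε) (huv : adjZ u v) :
    v ∈ intBdryZ W ∧ u ∈ extBdryZ W ∧ shiftZ s (-ε) v ∈ W := by
  have hvint : v ∈ intBdryZ W := ⟨hv, u, hu, adjZ_symm huv⟩
  have huext : u ∈ extBdryZ W := ⟨hu, v, hv, huv⟩
  refine ⟨hvint, huext, ?_⟩
  by_contra h
  exact hv' ⟨hvint, h⟩

/-- Let `χ` be a proper 3-coloring of `ℤ^d` (bipartitioned into even vertices
`E` and odd vertices `O` by parity of coordinate sum), and let `W` satisfy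
`∂_int W ⊆ O`, `∂_ext W ⊆ E`, with `χ` nonzero on `∂_int W ∪ ∂_ext W`. Then
for any signed coordinate direction `(s, ε)` and any `S ⊆ W^s`, the modified
coloring `χ^s_S` is again a proper 3-coloring of `ℤ^d`. -/
theorem chiShift_proper {d : ℕ} (hd : 1 ≤ d) (χ : (Fin d → ℤ) → Fin 3)
    (hχ : ∀ u v, adjZ u v → χ u ≠ χ v) (W : Set (Fin d → ℤ))
    (hint : ∀ x ∈ intBdryZ W, ¬ Even (∑ i, x i))
    (hext : ∀ x ∈ extBdryZ W, Even (∑ i, x i))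
    (hfree : ∀ x ∈ intBdryZ W ∪ extBdryZ W, χ x ≠ 0)
    (s : Fin d) (ε : ℤ) (hε : ε = 1 ∨ ε = -1)
    (S : Set (Fin d → ℤ)) (hS : S ⊆ sideSet W s ε) :
    ∀ u v, adjZ u v → chiShift χ W S s ε u ≠ chiShift χ W S s ε v := by
  have hswap0 : ∀ c : Fin 3, c ≠ 0 → swap12 c ≠ 0 := by decide
  have hswapinj : ∀ a b : Fin 3, swap12 a = swap12 b → a = b := by decide
  have key1 : ∀ a b c : Fin 3, a ≠ 0 → b ≠ 0 → a ≠ b → c ≠ a → swap12 c ≠ b := by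
    decide
  have key2 : ∀ a b c : Fin 3, a ≠ 0 → b ≠ 0 → a ≠ b → c ≠ b → swap12 a ≠ c := by
    decide
  intro u v huv
  simp only [chiShift]
  split_ifs with h1 h2 h3 h4 h5 h6 h7 h8
  -- Case 1: u ∈ S, v ∈ S : impossible (both odd).
  · exact absurd ((adjZ_parity huv).mpr (hint u (hS h1).1))
      (fun h => hint v (hS h2).1 h)
  -- Case 2: u ∈ S, v ∈ W \ W^s.
  · have hf := sideC_facts hε hint (hS h1) h3.1 h3.2 huv
    exact Ne.symm (hswap0 _ (hfree _ (Or.inl hf.1)))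
  -- Case 3: u ∈ S, v ∈ (W^s \ S) ∪ (V \ W).
  · by_cases hvW : v ∈ W
    · have hvside : v ∈ sideSet W s ε := by
        by_contra h
        exact h3 ⟨hvW, h⟩
      exact Ne.symm (hfree _ (Or.inl hvside.1))
    · have : v ∈ extBdryZ W := ⟨hvW, u, (hS h1).1.1, adjZ_symm huv⟩
      exact Ne.symm (hfree _ (Or.inr this))
  -- Case 4: u ∈ W \ W^s, v ∈ S.
  · have hf := sideC_facts hε hint (hS h5) h4.1 h4.2 (adjZ_symm huv)
    exact hswap0 _ (hfree _ (Or.inl hf.1))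
  -- Case 5: u ∈ W \ W^s, v ∈ W \ W^s.
  · exact fun h => hχ _ _ (adjZ_shift s (-ε) huv) (hswapinj _ _ h)
  -- Case 6: u ∈ W \ W^s, v ∈ (W^s \ S) ∪ (V \ W).
  · by_cases hvW : v ∈ W
    · have hvside : v ∈ sideSet W s ε := by
        by_contra h
        exact h6 ⟨hvW, h⟩
      have hf := sideC_facts hε hint hvside h4.1 h4.2 (adjZ_symm huv)
      exact key2 _ _ _ (hfree _ (Or.inl hf.1)) (hfree _ (Or.inr hf.2.2))
        (hχ _ _ (adjZ_shift s (-ε) huv))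
        (hχ _ _ (adjZ_shift_self s hε v))
    · have hf := outC_facts hvW h4.1 h4.2 (adjZ_symm huv)
      exact key1 _ _ _ (hfree _ (Or.inl hf.1)) (hfree _ (Or.inr hf.2.1))
        (hχ _ _ huv)
        (Ne.symm (hχ _ _ (adjZ_shift_self s hε u)))
  -- Case 7: u ∈ (W^s \ S) ∪ (V \ W), v ∈ S.
  · by_cases huW : u ∈ W
    · have huside : u ∈ sideSet W s ε := by
        by_contra h
        exact h4 ⟨huW, h⟩
      exact hfree _ (Or.inl huside.1)
    · have : u ∈ extBdryZ W := ⟨huW, v, (hS h7).1.1, huv⟩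
      exact hfree _ (Or.inr this)
  -- Case 8: u ∈ (W^s \ S) ∪ (V \ W), v ∈ W \ W^s.
  · by_cases huW : u ∈ W
    · have huside : u ∈ sideSet W s ε := by
        by_contra h
        exact h4 ⟨huW, h⟩
      have hf := sideC_facts hε hint huside h8.1 h8.2 huv
      exact Ne.symm (key2 _ _ _ (hfree _ (Or.inl hf.1))
        (hfree _ (Or.inr hf.2.2))
        (hχ _ _ (adjZ_symm (adjZ_shift s (-ε) huv)))
        (hχ _ _ (adjZ_shift_self s hε u)))
    · have hf := outC_facts huW h8.1 h8.2 huv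
      exact Ne.symm (key1 _ _ _ (hfree _ (Or.inl hf.1))
        (hfree _ (Or.inr hf.2.1))
        (Ne.symm (hχ _ _ huv))
        (Ne.symm (hχ _ _ (adjZ_shift_self s hε v))))
  -- Case 9: both keep χ.
  · exact hχ _ _ huv
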